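/- arXiv:2103.07728 — 2 statements merged into one kernel-verified Lean document; each statement's English description precedes it below -/
import Mathlib

section
/- Let α > 0 and a, b, C ∈ ℝ, and suppose that the cubic f(x) = x³/6 + (C − b)x²/2 − ax − α²C/2 has three real roots s₁ < s₂ < s₃. For i = 1, 2, 3 define the linear forms L_i(x, y, z) = (b − C − s_i)x + (a + s_i²/2)y + (Cα²/2 − s_i³/6)z on ℝ³. Then: (i) L_j(s_i²/2, s_i, 1) = (s_i − s_j)³/6 for all i, j; (ii) L_i(−a, b − C, 1) = 0 for all i; (iii) (s₃ − s₁)³·L₂ = (s₃ − s₂)³·L₁ + (s₂ − s₁)³·L₃ as linear forms; and consequently (iv) if (x, y, z) ∈ ℝ³ is such that the three numbers −L₁(x,y,z), L₂(x,y,z), −L₃(x,y,z) are all nonnegative (or all nonpositive), then L₁(x,y,z) = L₂(x,y,z) = L₃(x,y,z) = 0, which happens exactly when (x, y, z) ∈ ℝ·(−a, b − C, 1). -/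
/-!
Statement 16 (Fu–Li–Zhao, Lemma 4.5): the key sign computation for the linear forms
`L_i` attached to the roots of the cubic
`f(x) = x³/6 + (C - b)x²/2 - ax - α²C/2`.
-/

namespace BridgelandStability

/-- Fu–Li–Zhao, Lemma 4.5.
Let `α > 0` and `a, b, C ∈ ℝ`, and suppose the cubic
`f(x) = x³/6 + (C - b)x²/2 - ax - α²C/2` has three real roots `s₁ < s₂ < s₃`.
For a root `s` define the linear form
`L_s(x, y, z) = (b - C - s)·x + (a + s²/2)·y + (C·α²/2 - s³/6)·z` on `ℝ³`.  Then:
(i) `L_{s_j}(s_i²/2, s_i, 1) = (s_i - s_j)³/6` for all `i, j`;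
(ii) `L_{s_i}(-a, b - C, 1) = 0` for all `i`;
(iii) `(s₃ - s₁)³·L_{s₂} = (s₃ - s₂)³·L_{s₁} + (s₂ - s₁)³·L_{s₃}` as linear forms;
(iv) if `-L_{s₁}, L_{s₂}, -L_{s₃}` are all nonnegative (or all nonpositive) at some
`(x, y, z)`, then all three forms vanish there, which happens exactly when
`(x, y, z) ∈ ℝ·(-a, b - C, 1)`. -/
theorem cubic_roots_linear_forms
    (α a b C s₁ s₂ s₃ : ℝ) (hα : 0 < α) (h₁₂ : s₁ < s₂) (h₂₃ : s₂ < s₃)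
    (hroot : ∀ s ∈ ({s₁, s₂, s₃} : Set ℝ),
      s ^ 3 / 6 + (C - b) * s ^ 2 / 2 - a * s - α ^ 2 * C / 2 = 0)
    (L : ℝ → ℝ → ℝ → ℝ → ℝ)
    (hL : ∀ s x y z : ℝ,
      L s x y z = (b - C - s) * x + (a + s ^ 2 / 2) * y + (C * α ^ 2 / 2 - s ^ 3 / 6) * z) :
    (∀ s ∈ ({s₁, s₂, s₃} : Set ℝ), ∀ t ∈ ({s₁, s₂, s₃} : Set ℝ),
      L t (s ^ 2 / 2) s 1 = (s - t) ^ 3 / 6) ∧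
    (∀ s ∈ ({s₁, s₂, s₃} : Set ℝ), L s (-a) (b - C) 1 = 0) ∧
    (∀ x y z : ℝ, (s₃ - s₁) ^ 3 * L s₂ x y z =
      (s₃ - s₂) ^ 3 * L s₁ x y z + (s₂ - s₁) ^ 3 * L s₃ x y z) ∧
    (∀ x y z : ℝ,
      ((0 ≤ -L s₁ x y z ∧ 0 ≤ L s₂ x y z ∧ 0 ≤ -L s₃ x y z) ∨
        (-L s₁ x y z ≤ 0 ∧ L s₂ x y z ≤ 0 ∧ -L s₃ x y z ≤ 0)) →
      (L s₁ x y z = 0 ∧ L s₂ x y z = 0 ∧ L s₃ x y z = 0)) ∧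
    (∀ x y z : ℝ,
      (L s₁ x y z = 0 ∧ L s₂ x y z = 0 ∧ L s₃ x y z = 0) ↔
        ∃ c : ℝ, x = -(c * a) ∧ y = c * (b - C) ∧ z = c) := by
  have h1 := hroot s₁ (by simp)
  have h2 := hroot s₂ (by simp)
  have h3 := hroot s₃ (by simp)
  have d21 : s₂ - s₁ ≠ 0 := sub_ne_zero.2 h₁₂.ne'
  have d32 : s₃ - s₂ ≠ 0 := sub_ne_zero.2 h₂₃.ne'
  have d31 : s₃ - s₁ ≠ 0 := sub_ne_zero.2 (h₁₂.trans h₂₃).ne'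
  have q12 : s₁ ^ 2 + s₁ * s₂ + s₂ ^ 2 + 3 * (C - b) * (s₁ + s₂) - 6 * a = 0 := by
    apply mul_left_cancel₀ d21
    rw [mul_zero]
    linear_combination 6 * h2 - 6 * h1
  have q13 : s₁ ^ 2 + s₁ * s₃ + s₃ ^ 2 + 3 * (C - b) * (s₁ + s₃) - 6 * a = 0 := by
    apply mul_left_cancel₀ d31
    rw [mul_zero]
    linear_combination 6 * h3 - 6 * h1
  have hb : b = C + (s₁ + s₂ + s₃) / 3 := by
    apply mul_left_cancel₀ d32
    linear_combination (q12 - q13) / 3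
  subst hb
  have ha : a = -(s₁ * s₂ + s₁ * s₃ + s₂ * s₃) / 6 := by
    linear_combination (-1 / 6 : ℝ) * q12
  subst ha
  have hc : C * α ^ 2 = s₁ * s₂ * s₃ / 3 := by linear_combination (-2 : ℝ) * h1
  have hiii : ∀ x y z : ℝ, (s₃ - s₁) ^ 3 * L s₂ x y z =
      (s₃ - s₂) ^ 3 * L s₁ x y z + (s₂ - s₁) ^ 3 * L s₃ x y z := by
    intro x y z
    rw [hL, hL, hL]
    linear_combination (((s₃ - s₁) ^ 3 - (s₃ - s₂) ^ 3 - (s₂ - s₁) ^ 3) * z / 2) * hc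
  have p21 : (0 : ℝ) < (s₂ - s₁) ^ 3 := pow_pos (sub_pos.2 h₁₂) 3
  have p32 : (0 : ℝ) < (s₃ - s₂) ^ 3 := pow_pos (sub_pos.2 h₂₃) 3
  have p31 : (0 : ℝ) < (s₃ - s₁) ^ 3 := pow_pos (sub_pos.2 (h₁₂.trans h₂₃)) 3
  refine ⟨?_, ?_, hiii, ?_, ?_⟩
  · intro s hs t ht
    rw [hL]
    linear_combination -(hroot s hs)
  · intro s hs
    rw [hL]
    linear_combination -(hroot s hs)
  · intro x y z h
    have key := hiii x y z
    rcases h with ⟨hA, hB, hC⟩ | ⟨hA, hB, hC⟩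
    · have h1' : L s₁ x y z ≤ 0 := by linarith
      have h3' : L s₃ x y z ≤ 0 := by linarith
      have t1 : (s₃ - s₂) ^ 3 * L s₁ x y z ≤ 0 := by
        have := mul_nonneg p32.le (neg_nonneg.2 h1'); rw [mul_neg] at this; linarith
      have t3 : (s₂ - s₁) ^ 3 * L s₃ x y z ≤ 0 := by
        have := mul_nonneg p21.le (neg_nonneg.2 h3'); rw [mul_neg] at this; linarith
      have hL2 : L s₂ x y z = 0 := by
        have hm : (s₃ - s₁) ^ 3 * L s₂ x y z ≤ (s₃ - s₁) ^ 3 * 0 := by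
          rw [mul_zero, key]; linarith
        exact le_antisymm (le_of_mul_le_mul_left hm p31) hB
      rw [hL2, mul_zero] at key
      have e1 : (s₃ - s₂) ^ 3 * L s₁ x y z = 0 := by linarith
      have e3 : (s₂ - s₁) ^ 3 * L s₃ x y z = 0 := by linarith
      exact ⟨(mul_eq_zero.mp e1).resolve_left (ne_of_gt p32), hL2,
        (mul_eq_zero.mp e3).resolve_left (ne_of_gt p21)⟩
    · have h1' : 0 ≤ L s₁ x y z := by linarith
      have h3' : 0 ≤ L s₃ x y z := by linarith
      have t1 : 0 ≤ (s₃ - s₂) ^ 3 * L s₁ x y z := mul_nonneg p32.le h1'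
      have t3 : 0 ≤ (s₂ - s₁) ^ 3 * L s₃ x y z := mul_nonneg p21.le h3'
      have hL2 : L s₂ x y z = 0 := by
        have hm : (s₃ - s₁) ^ 3 * 0 ≤ (s₃ - s₁) ^ 3 * L s₂ x y z := by
          rw [mul_zero, key]; linarith
        exact le_antisymm hB (le_of_mul_le_mul_left hm p31)
      rw [hL2, mul_zero] at key
      have e1 : (s₃ - s₂) ^ 3 * L s₁ x y z = 0 := by linarith
      have e3 : (s₂ - s₁) ^ 3 * L s₃ x y z = 0 := by linarith
      exact ⟨(mul_eq_zero.mp e1).resolve_left (ne_of_gt p32), hL2,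
        (mul_eq_zero.mp e3).resolve_left (ne_of_gt p21)⟩
  · intro x y z
    constructor
    · rintro ⟨e1, e2, e3⟩
      rw [hL] at e1 e2 e3
      have k12 : x - (s₁ + s₂) / 2 * y + (s₁ ^ 2 + s₁ * s₂ + s₂ ^ 2) / 6 * z = 0 := by
        apply mul_left_cancel₀ d21
        rw [mul_zero]
        linear_combination e1 - e2
      have k13 : x - (s₁ + s₃) / 2 * y + (s₁ ^ 2 + s₁ * s₃ + s₃ ^ 2) / 6 * z = 0 := by
        apply mul_left_cancel₀ d31
        rw [mul_zero]
        linear_combination e1 - e3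
      have hy : y = z * (C + (s₁ + s₂ + s₃) / 3 - C) := by
        apply mul_left_cancel₀ d32
        linear_combination 2 * k12 - 2 * k13
      refine ⟨z, ?_, hy, rfl⟩
      linear_combination k12 + ((s₁ + s₂) / 2) * hy
    · rintro ⟨c, rfl, rfl, rfl⟩
      rw [hL, hL, hL]
      exact ⟨by linear_combination (-z) * h1, by linear_combination (-z) * h2,
        by linear_combination (-z) * h3⟩

end BridgelandStability
end

section
/- Let σ and τ be two stability conditions on D^b(X) (X a smooth projective variety) with the same central charge, and suppose d(σ, τ) ≤ 1 for the generalized metric d(σ, τ) = sup over nonzero objects E of max(|φ⁻_σ(E) − φ⁻_τ(E)|, |φ⁺_σ(E) − φ⁺_τ(E)|). Then σ = τ. -/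
/-!
# Bridgeland stability conditions: basic framework

We formalize slicings, Harder–Narasimhan filtrations, pre-stability conditions and
(numerical) stability conditions on a pretriangulated category `D`, following
Bridgeland and the conventions of Fu–Li–Zhao, "Stability manifolds of varieties with
finite Albanese morphisms".
-/

open CategoryTheory CategoryTheory.Limits CategoryTheory.Pretriangulated
open scoped TensorProduct ENNReal

noncomputable section

namespace BridgelandStability

universe w v u

variable (D : Type u) [Category.{v} D] [HasZeroObject D] [Preadditive D]
  [HasShift D ℤ] [∀ n : ℤ, (CategoryTheory.shiftFunctor D n).Additive] [Pretriangulated D]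

/-- A Harder–Narasimhan filtration of an object `E` with respect to a collection of
full subcategories `P φ` (`φ ∈ ℝ`): a finite tower of distinguished triangles
`0 = E₀ → E₁ → ⋯ → E_m = E` whose cones (the HN factors) `Aᵢ` are nonzero objects of
`P φᵢ` with strictly decreasing phases `φ₁ > ⋯ > φ_m`. -/
structure HNFiltration (P : ℝ → Set D) (E : D) where
  n : ℕ
  phase : Fin n → ℝ
  phase_strictAnti : StrictAnti phase
  obj : Fin (n + 1) → D
  obj_zero : IsZero (obj 0)
  obj_last : obj (Fin.last n) = E
  factor : Fin n → D
  factor_mem : ∀ i, factor i ∈ P (phase i)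
  factor_nonzero : ∀ i, ¬ IsZero (factor i)
  factor_triangle : ∀ i : Fin n,
    ∃ (f : obj i.castSucc ⟶ obj i.succ) (g : obj i.succ ⟶ factor i)
      (h : factor i ⟶ (obj i.castSucc)⟦(1 : ℤ)⟧),
      Triangle.mk f g h ∈ (distTriang D)

/-- A slicing of the triangulated category `D` (Bridgeland): full additive subcategories
`P φ` indexed by `φ ∈ ℝ` with `P (φ)[1] = P (φ + 1)`, no morphisms from higher to lower
phase, and Harder–Narasimhan filtrations for every object. -/
structure Slicing where
  P : ℝ → Set D
  iso_closed : ∀ (φ : ℝ) (E F : D), E ∈ P φ → Nonempty (E ≅ F) → F ∈ P φ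
  zero_mem : ∀ (φ : ℝ) (E : D), IsZero E → E ∈ P φ
  shift_mem : ∀ (φ : ℝ) (E : D), E ∈ P φ ↔ (E⟦(1 : ℤ)⟧ ∈ P (φ + 1))
  hom_vanish : ∀ ⦃φ ψ : ℝ⦄, ψ < φ → ∀ ⦃E F : D⦄, E ∈ P φ → F ∈ P ψ →
    ∀ f : E ⟶ F, f = 0
  hn_exists : ∀ E : D, Nonempty (HNFiltration D P E)

variable {D}

namespace Slicing

/-- A nonzero object of `P φ` is semistable of phase `φ`. -/
def IsSemistable (S : Slicing D) (φ : ℝ) (E : D) : Prop := E ∈ S.P φ ∧ ¬ IsZero E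

/-- A stable object of phase `φ` is a simple object of the (abelian) category `P φ`:
it is semistable and admits no proper nontrivial subobject in `P φ`, where subobjects and
quotients in `P φ` are encoded by distinguished triangles `A → E → B → A[1]` with
`A, B ∈ P φ`. -/
def IsStable (S : Slicing D) (φ : ℝ) (E : D) : Prop :=
  S.IsSemistable φ E ∧
    ∀ (A B : D) (f : A ⟶ E) (g : E ⟶ B) (h : B ⟶ A⟦(1 : ℤ)⟧),
      Triangle.mk f g h ∈ (distTriang D) → A ∈ S.P φ → B ∈ S.P φ → IsZero A ∨ IsZero B

/-- The set of phases of the (nonzero) Harder–Narasimhan factors of `E`. -/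
def hnPhases (S : Slicing D) (E : D) : Set ℝ :=
  {φ : ℝ | ∃ (h : HNFiltration D S.P E) (i : Fin h.n), h.phase i = φ}

/-- `φ⁺(E)`: the largest HN phase of `E`. -/
def phasePlus (S : Slicing D) (E : D) : ℝ := sSup (S.hnPhases E)

/-- `φ⁻(E)`: the smallest HN phase of `E`. -/
def phaseMinus (S : Slicing D) (E : D) : ℝ := sInf (S.hnPhases E)

/-- `E ∈ P(I)`: `E` admits a HN filtration all of whose phases lie in `I`. -/
def memSlice (S : Slicing D) (I : Set ℝ) (E : D) : Prop :=
  ∃ h : HNFiltration D S.P E, ∀ i, h.phase i ∈ I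

/-- `A` is (isomorphic to) the Harder–Narasimhan factor `HN^a(E)` of `E` of phase `a`
(the zero object if no HN factor of `E` has phase `a`). -/
def IsHNFactorAt (S : Slicing D) (a : ℝ) (E A : D) : Prop :=
  ∃ h : HNFiltration D S.P E,
    (∃ i, h.phase i = a ∧ Nonempty (h.factor i ≅ A)) ∨
      ((∀ i, h.phase i ≠ a) ∧ IsZero A)

/-- `Y` is (isomorphic to) the truncated Harder–Narasimhan factor `HN^{≤ c}(E)`:
there is a distinguished triangle `W → E → Y → W[1]` with `W ∈ P((c, +∞))` and
`Y ∈ P((-∞, c])`. -/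
def IsHNTruncLE (S : Slicing D) (c : ℝ) (E Y : D) : Prop :=
  ∃ (W : D) (f : W ⟶ E) (g : E ⟶ Y) (h : Y ⟶ W⟦(1 : ℤ)⟧),
    Triangle.mk f g h ∈ (distTriang D) ∧ S.memSlice (Set.Ioi c) W ∧
      S.memSlice (Set.Iic c) Y

/-- `A` is a subquotient of `H` inside the abelian category `P φ`:  there are
distinguished triangles `W → H → Q → W[1]` and `U → W → A → U[1]` with all objects in
`P φ`. -/
def IsSubquotientAt (S : Slicing D) (φ : ℝ) (A H : D) : Prop :=
  ∃ (W Q U : D) (f : W ⟶ H) (g : H ⟶ Q) (h : Q ⟶ W⟦(1 : ℤ)⟧)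
    (f' : U ⟶ W) (g' : W ⟶ A) (h' : A ⟶ U⟦(1 : ℤ)⟧),
    Triangle.mk f g h ∈ (distTriang D) ∧ Triangle.mk f' g' h' ∈ (distTriang D) ∧
      W ∈ S.P φ ∧ Q ∈ S.P φ ∧ U ∈ S.P φ ∧ A ∈ S.P φ

/-- `A` is a Jordan–Hölder factor of `E`: a stable subquotient (in `P φ`) of a
Harder–Narasimhan factor of `E` of some phase `φ`. -/
def IsJHFactorOf (S : Slicing D) (E A : D) : Prop :=
  ∃ (φ : ℝ) (H : D), S.IsHNFactorAt φ E H ∧ S.IsStable φ A ∧ S.IsSubquotientAt φ A H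

end Slicing

variable (D)

/-- A Bridgeland pre-stability condition: a slicing together with a compatible central
charge `Z`, viewed as a function on objects that is additive on distinguished triangles
(equivalently, a group homomorphism `K(D) → ℂ`). -/
structure PreStability where
  slicing : Slicing D
  Z : D → ℂ
  Z_zero : ∀ E : D, IsZero E → Z E = 0
  Z_additive : ∀ T : Triangle D, T ∈ (distTriang D) → Z T.obj₂ = Z T.obj₁ + Z T.obj₃
  Z_phase : ∀ (φ : ℝ) (E : D), E ∈ slicing.P φ → ¬ IsZero E →
    ∃ m : ℝ, 0 < m ∧ Z E = (m : ℂ) * Complex.exp ((Real.pi * φ : ℝ) * Complex.I)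

/-- A Bridgeland stability condition: a pre-stability condition whose central charge
factors through a surjection `v : K(D) ↠ Λ` onto a finite-rank free abelian group and
which satisfies the support property: there is a quadratic form `Q` on `Λ ⊗ ℝ` which is
negative definite on `ker Z` and nonnegative on classes of semistable objects. -/
structure StabilityCondition extends PreStability D where
  Λ : Type w
  [Λ_addCommGroup : AddCommGroup Λ]
  Λ_free : Module.Free ℤ Λ
  Λ_finite : Module.Finite ℤ Λ
  v : D → Λ
  v_zero : ∀ E : D, IsZero E → v E = 0
  v_additive : ∀ T : Triangle D, T ∈ (distTriang D) → v T.obj₂ = v T.obj₁ + v T.obj₃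
  v_surjective : AddSubgroup.closure (Set.range v) = ⊤
  ZΛ : Λ →+ ℂ
  Z_factors : ∀ E : D, Z E = ZΛ (v E)
  support_property :
    ∃ (Q : QuadraticForm ℝ (ℝ ⊗[ℤ] Λ)) (ZR : (ℝ ⊗[ℤ] Λ) →ₗ[ℝ] ℂ),
      (∀ a : Λ, ZR ((1 : ℝ) ⊗ₜ[ℤ] a) = ZΛ a) ∧
      (∀ x : ℝ ⊗[ℤ] Λ, ZR x = 0 → x ≠ 0 → Q x < 0) ∧
      (∀ (φ : ℝ) (E : D), E ∈ slicing.P φ → ¬ IsZero E → 0 ≤ Q ((1 : ℝ) ⊗ₜ[ℤ] v E))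

variable {D}

/-- A stability condition is numerical (with respect to the Euler pairing `χ` of `D`) if
the map to the lattice `Λ` factors through the numerical Grothendieck group, i.e. through
the quotient of `K(D)` by the radical of `χ`. -/
def StabilityCondition.IsNumerical (σ : StabilityCondition.{w} D) (χ : D → D → ℤ) : Prop :=
  ∀ E F : D, (∀ G : D, χ E G = χ F G) → (∀ G : D, χ G E = χ G F) → σ.v E = σ.v F

variable (D)

/-- A filtration of `E` by distinguished triangles whose factors satisfy `C`. -/
def HasFiltrationWithFactors (C : D → Prop) (E : D) : Prop :=
  ∃ (n : ℕ) (obj : Fin (n + 1) → D) (fac : Fin n → D),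
    IsZero (obj 0) ∧ obj (Fin.last n) = E ∧ (∀ i, C (fac i)) ∧
    ∀ i : Fin n, ∃ (f : obj i.castSucc ⟶ obj i.succ) (g : obj i.succ ⟶ fac i)
      (h : fac i ⟶ (obj i.castSucc)⟦(1 : ℤ)⟧), Triangle.mk f g h ∈ (distTriang D)

variable (V : Type) [NormedAddCommGroup V] [NormedSpace ℝ V] [FiniteDimensional ℝ V]

/-- A stability condition with respect to a fixed additive map `v` from objects of `D`
to a finite-dimensional real vector space `V` (whose image generates the lattice `Λ`,
e.g. `Λ_H`):  a slicing and a central charge factoring as `Z = Z_V ∘ v`, satisfying the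
support property: some quadratic form `Q` on `Λ ⊗ ℝ = span(im v)` is negative definite
on `ker Z` and nonnegative on classes of semistable objects. -/
structure StabilityConditionWrt (v : D → V) where
  slicing : Slicing D
  ZV : V →ₗ[ℝ] ℂ
  Z_phase : ∀ (φ : ℝ) (E : D), E ∈ slicing.P φ → ¬ IsZero E →
    ∃ m : ℝ, 0 < m ∧ ZV (v E) = (m : ℂ) * Complex.exp ((Real.pi * φ : ℝ) * Complex.I)
  support_property :
    ∃ Q : QuadraticForm ℝ V,
      (∀ x : V, x ∈ Submodule.span ℝ (Set.range v) → ZV x = 0 → x ≠ 0 → Q x < 0) ∧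
      (∀ (φ : ℝ) (E : D), E ∈ slicing.P φ → ¬ IsZero E → 0 ≤ Q (v E))

variable {D V}

/-- The generalized (extended) distance between two stability conditions:
`sup_E max(|φ⁺_σ(E) - φ⁺_τ(E)|, |φ⁻_σ(E) - φ⁻_τ(E)|) ⊔ ‖Z_σ - Z_τ‖`. -/
def stabDist {v : D → V} (σ τ : StabilityConditionWrt D V v) : ℝ≥0∞ :=
  (⨆ E : D, ENNReal.ofReal
      (max |σ.slicing.phasePlus E - τ.slicing.phasePlus E|
        |σ.slicing.phaseMinus E - τ.slicing.phaseMinus E|)) ⊔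
    ENNReal.ofReal ‖LinearMap.toContinuousLinearMap (σ.ZV - τ.ZV)‖

/-- The metric topology on the space of stability conditions `Stab_Λ`, generated by the
open balls of the generalized metric `stabDist`. -/
def stabTopology {v : D → V} : TopologicalSpace (StabilityConditionWrt D V v) :=
  TopologicalSpace.generateFrom
    {U | ∃ (σ : StabilityConditionWrt D V v) (ε : ℝ≥0∞), 0 < ε ∧
      U = {τ | stabDist σ τ < ε}}

/-- An object `G` of a heart `A ⊆ D` which is semistable with respect to the central
charge `Z` (on the heart): no subobject of `G` in `A` (encoded by a distinguished
triangle `U → G → Q → U[1]` with `U, Q ∈ A`) has strictly larger phase, phases being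
measured by the argument of `Z`. -/
def heartSemistable (A : Set D) (Z : D → ℂ) (G : D) : Prop :=
  G ∈ A ∧ ¬ IsZero G ∧
    ∀ (U Q : D) (f : U ⟶ G) (g : G ⟶ Q) (h : Q ⟶ U⟦(1 : ℤ)⟧),
      Triangle.mk f g h ∈ (distTriang D) → U ∈ A → Q ∈ A → ¬ IsZero U → ¬ IsZero Q →
        (Z U).arg ≤ (Z G).arg

/-- The slicing obtained from a heart `A` together with a central charge `Z` mapping
nonzero objects of `A` to the semi-closed upper half plane: `P(φ)` for `φ ∈ (0,1]`
consists of the `Z`-semistable objects of `A` of phase `φ = arg(Z)/π`, and it is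
extended to all `φ ∈ ℝ` by `P(φ + n) = P(φ)[n]`. -/
def heartSlicingP (A : Set D) (Z : D → ℂ) : ℝ → Set D := fun φ =>
  {F : D | IsZero F ∨ ∃ (n : ℤ) (G : D), heartSemistable A Z G ∧
    (Z G).arg = Real.pi * (φ - n) ∧ 0 < φ - (n : ℝ) ∧ φ - (n : ℝ) ≤ 1 ∧
      Nonempty (F ≅ G⟦n⟧)}

/-- The universal cover `G̃L⁺₂(ℝ)` of `GL⁺₂(ℝ)`: pairs `(L, f)` of an
orientation-preserving `ℝ`-linear automorphism `L` of `ℂ = ℝ²` together with a lift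
`f : ℝ → ℝ` of its action on the rays of `ℂ`, i.e. `f` is an increasing function with
`f(φ + 1) = f(φ) + 1` and `L(exp(iπ f(φ))) ∈ ℝ_{>0} · exp(iπφ)`. -/
structure GLtildePlus where
  L : ℂ ≃ₗ[ℝ] ℂ
  det_pos : 0 < LinearMap.det (L : ℂ →ₗ[ℝ] ℂ)
  f : ℝ → ℝ
  f_mono : StrictMono f
  f_shift : ∀ φ : ℝ, f (φ + 1) = f φ + 1
  compat : ∀ φ : ℝ, ∃ r : ℝ, 0 < r ∧
    L (Complex.exp ((Real.pi * f φ : ℝ) * Complex.I)) =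
      (r : ℂ) * Complex.exp ((Real.pi * φ : ℝ) * Complex.I)

/-- The topology on `G̃L⁺₂(ℝ)` (induced by pointwise convergence of the data). -/
def GLtildePlus.topology : TopologicalSpace GLtildePlus :=
  TopologicalSpace.induced (fun g => (g.f, (g.L : ℂ → ℂ))) inferInstance

/-- `σ = σ₀ · g` for some `g ∈ G̃L⁺₂(ℝ)`, where `σ₀` is the stability condition with
heart `A` and central charge `Z₀`:  there is `g = (L, f)` in `G̃L⁺₂(ℝ)` with
`P_σ(φ) = P_{σ₀}(f(φ))` for all `φ` and `Z_σ = L ∘ Z₀`. -/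
def IsGLtildeTranslateOf {v : D → V} (σ : StabilityConditionWrt D V v)
    (A : Set D) (Z₀ : D → ℂ) : Prop :=
  ∃ g : GLtildePlus,
    (∀ φ : ℝ, σ.slicing.P φ = heartSlicingP A Z₀ (g.f φ)) ∧
    (∀ E : D, σ.ZV (v E) = g.L (Z₀ E))

/-!
Let `E` be `σ`-semistable of phase `φ` and suppose some `τ`-HN factor of `E` has phase `> φ`. The
`τ`-HN truncation `V ⊆ E` collecting these factors has `τ`-phases in `(φ, φ + 1]`, since
`φ⁺_τ(E) ≤ φ⁺_σ(E) + 1`. Its `σ`-phases lie in `(φ - 1, φ]`: above because `V` is built from `E` by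
extensions by the shifted remaining factors `A[-1]`, whose `σ`-phases are `≤ φ`; below because
`φ⁻_σ(V) ≥ φ⁻_τ(V) - 1 > φ - 1`. Then `e^{-iπφ} Z(V)` lies both in the semi-closed upper half
plane and in its negative, which is absurd. So `φ⁺_τ(E) ≤ φ`. Applied with `σ` and `τ` exchanged to
the last `τ`-HN factor `B` of `E`, this shows that `B` has `σ`-phases `≤ φ⁻_τ(E)`; as `E → B` is
nonzero, `φ⁻_τ(E) ≥ φ`. Hence `E` is `τ`-semistable of phase `φ`.
-/

namespace HNFiltration

variable {P : ℝ → Set D} {E : D} (F : HNFiltration D P E)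

/-- `mor₁`, `mor₂`, `mor₃`: a distinguished triangle `Eᵢ → Eᵢ₊₁ → Aᵢ → Eᵢ⟦1⟧` chosen from
`F.factor_triangle i`. -/
def mor₁ (i : Fin F.n) : F.obj i.castSucc ⟶ F.obj i.succ := (F.factor_triangle i).choose

def mor₂ (i : Fin F.n) : F.obj i.succ ⟶ F.factor i := (F.factor_triangle i).choose_spec.choose

def mor₃ (i : Fin F.n) : F.factor i ⟶ (F.obj i.castSucc)⟦(1 : ℤ)⟧ :=
  (F.factor_triangle i).choose_spec.choose_spec.choose

lemma triangle_distinguished (i : Fin F.n) :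
    Triangle.mk (F.mor₁ i) (F.mor₂ i) (F.mor₃ i) ∈ distTriang D :=
  (F.factor_triangle i).choose_spec.choose_spec.choose_spec

lemma pos_of_not_isZero (hE : ¬ IsZero E) : 0 < F.n := by
  refine Nat.pos_of_ne_zero fun h0 => hE ?_
  have h : (0 : Fin (F.n + 1)) = Fin.last F.n := Fin.ext (by simp [h0])
  exact F.obj_last ▸ h ▸ F.obj_zero

lemma isIso_mor₂_zero (hn : 0 < F.n) : IsIso (F.mor₂ ⟨0, hn⟩) :=
  (Triangle.isZero₁_iff_isIso₂ _ (F.triangle_distinguished _)).1 F.obj_zero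

lemma obj_succ_last (hn : 0 < F.n) : F.obj (⟨F.n - 1, by omega⟩ : Fin F.n).succ = E := by
  rw [show (⟨F.n - 1, _⟩ : Fin F.n).succ = Fin.last F.n from Fin.ext (by simp; omega)]
  exact F.obj_last

lemma phase_le_phase_zero (hn : 0 < F.n) (i : Fin F.n) : F.phase i ≤ F.phase ⟨0, hn⟩ :=
  F.phase_strictAnti.antitone (Fin.mk_le_mk.2 (Nat.zero_le _))

lemma phase_last_le_phase (hn : 0 < F.n) (i : Fin F.n) :
    F.phase ⟨F.n - 1, by omega⟩ ≤ F.phase i :=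
  F.phase_strictAnti.antitone (Fin.mk_le_mk.2 (by omega))

lemma exists_phase_split (t : ℝ) : ∃ k ≤ F.n, ∀ i : Fin F.n, t < F.phase i ↔ i.1 < k := by
  classical
  have hex : ∃ k, k = F.n ∨ ∃ i : Fin F.n, i.1 = k ∧ F.phase i ≤ t := ⟨F.n, Or.inl rfl⟩
  refine ⟨Nat.find hex, Nat.find_min' hex (Or.inl rfl), fun i => ⟨fun hi => ?_, fun hi => ?_⟩⟩
  · by_contra! hk
    rcases Nat.find_spec hex with h | ⟨j, hj, hjt⟩
    · omega
    · exact (hjt.trans_lt hi).not_ge (F.phase_strictAnti.antitone (Fin.le_def.2 (hj ▸ hk)))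
  · by_contra! hi'
    exact Nat.find_min hex hi (Or.inr ⟨i, rfl, hi'⟩)

def truncate (k : ℕ) (hk : k ≤ F.n) : HNFiltration D P (F.obj ⟨k, Nat.lt_succ_of_le hk⟩) where
  n := k
  phase i := F.phase ⟨i.1, lt_of_lt_of_le i.2 hk⟩
  phase_strictAnti i j hij := F.phase_strictAnti (show (⟨i.1, _⟩ : Fin F.n) < ⟨j.1, _⟩ from hij)
  obj j := F.obj ⟨j.1, by omega⟩
  obj_zero := F.obj_zero
  obj_last := rfl
  factor i := F.factor ⟨i.1, lt_of_lt_of_le i.2 hk⟩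
  factor_mem _ := F.factor_mem _
  factor_nonzero _ := F.factor_nonzero _
  factor_triangle i := F.factor_triangle ⟨i.1, lt_of_lt_of_le i.2 hk⟩

open ZeroObject in
def single {φ : ℝ} (hE : E ∈ P φ) (hne : ¬ IsZero E) : HNFiltration D P E where
  n := 1
  phase _ := φ
  phase_strictAnti := Subsingleton.strictAnti _
  obj j := if j.1 = 0 then 0 else E
  obj_zero := by simpa using isZero_zero D
  obj_last := by simp
  factor _ := E
  factor_mem _ := hE
  factor_nonzero _ := hne
  factor_triangle i := by
    obtain rfl : i = 0 := Subsingleton.elim _ _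
    exact ⟨_, _, _, contractible_distinguished₁ E⟩

lemma map_eq_sum_factor {M : Type*} [AddCommMonoid M] (Z : D → M)
    (hZ₀ : ∀ X, IsZero X → Z X = 0) (hZ : ∀ T ∈ distTriang D, Z T.obj₂ = Z T.obj₁ + Z T.obj₃) :
    Z E = ∑ i, Z (F.factor i) := by
  have key : ∀ k (hk : k ≤ F.n),
      Z (F.obj ⟨k, by omega⟩) = ∑ i : Fin k, Z (F.factor (Fin.castLE hk i)) := by
    intro k
    induction k with
    | zero => intro _; simpa using hZ₀ _ F.obj_zero
    | succ k ih =>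
      intro hk
      rw [Fin.sum_univ_castSucc]
      simp only [Fin.castLE_castSucc]
      rw [← ih (by omega)]
      exact hZ _ (F.triangle_distinguished ⟨k, hk⟩)
  have := key F.n le_rfl
  simp only [Fin.castLE_rfl, id] at this
  rwa [show F.obj ⟨F.n, _⟩ = E from F.obj_last] at this

end HNFiltration

omit [HasZeroObject D] [Pretriangulated D] in
lemma shift_hom_eq_zero {X Y : D} (h : ∀ g : X ⟶ Y⟦(-1 : ℤ)⟧, g = 0) (f : X⟦(1 : ℤ)⟧ ⟶ Y) :
    f = 0 := by
  refine ((shiftFunctor D (-1 : ℤ)).map_eq_zero_iff).1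
    ((cancel_epi ((shiftEquiv D (1 : ℤ)).unitIso.hom.app X)).1 ?_)
  exact (h _).trans comp_zero.symm

omit [HasZeroObject D] [Pretriangulated D] in
lemma hom_shift_eq_zero {X Y : D} (h : ∀ g : X⟦(1 : ℤ)⟧ ⟶ Y, g = 0) (f : X ⟶ Y⟦(-1 : ℤ)⟧) :
    f = 0 := by
  refine ((shiftFunctor D (1 : ℤ)).map_eq_zero_iff).1
    ((cancel_mono ((shiftEquiv D (1 : ℤ)).counitIso.hom.app Y)).1 ?_)
  exact (h _).trans zero_comp.symm

namespace Slicing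

variable (S : Slicing D)

lemma shift_neg_mem {X : D} {φ : ℝ} (hX : X ∈ S.P φ) : X⟦(-1 : ℤ)⟧ ∈ S.P (φ - 1) := by
  refine (S.shift_mem (φ - 1) _).2 ?_
  rw [sub_add_cancel]
  exact S.iso_closed φ X _ hX ⟨((shiftEquiv D (1 : ℤ)).counitIso.app X).symm⟩

/-- For nonzero `X` this says `φ⁺(X) ≤ t` (`phasePlus_le_iff_noHomFromAbove`). -/
def NoHomFromAbove (t : ℝ) (X : D) : Prop :=
  ∀ ⦃c : ℝ⦄, t < c → ∀ ⦃C : D⦄, C ∈ S.P c → ∀ f : C ⟶ X, f = 0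

variable {S}

lemma NoHomFromAbove.mono {t t' : ℝ} {X : D} (h : S.NoHomFromAbove t X) (htt' : t ≤ t') :
    S.NoHomFromAbove t' X :=
  fun _ hc => h (htt'.trans_lt hc)

lemma noHomFromAbove_of_isZero (t : ℝ) {X : D} (hX : IsZero X) : S.NoHomFromAbove t X :=
  fun _ _ _ _ f => hX.eq_of_tgt f 0

lemma noHomFromAbove_of_mem {ψ t : ℝ} {X : D} (hX : X ∈ S.P ψ) (h : ψ ≤ t) :
    S.NoHomFromAbove t X :=
  fun _ hc _ hC f => S.hom_vanish (h.trans_lt hc) hC hX f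

lemma NoHomFromAbove.of_distTriang {t : ℝ} {T : Triangle D} (hT : T ∈ distTriang D)
    (h₁ : S.NoHomFromAbove t T.obj₁) (h₃ : S.NoHomFromAbove t T.obj₃) :
    S.NoHomFromAbove t T.obj₂ := by
  intro c hc C hC f
  obtain ⟨g, rfl⟩ := Triangle.coyoneda_exact₂ T hT f (h₃ hc hC _)
  rw [h₁ hc hC g, zero_comp]

lemma NoHomFromAbove.shift_neg {t : ℝ} {X : D} (h : S.NoHomFromAbove t X) :
    S.NoHomFromAbove (t - 1) (X⟦(-1 : ℤ)⟧) :=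
  fun _ hc _ hC => hom_shift_eq_zero (h (by linarith) ((S.shift_mem _ _).1 hC))

lemma noHomFromAbove_of_phase_le {t : ℝ} {X : D} (F : HNFiltration D S.P X)
    (ht : ∀ i, F.phase i ≤ t) : S.NoHomFromAbove t X := by
  suffices ∀ j, S.NoHomFromAbove t (F.obj j) from F.obj_last ▸ this (Fin.last F.n)
  intro j
  induction j using Fin.induction with
  | zero => exact noHomFromAbove_of_isZero t F.obj_zero
  | succ i ih =>
    exact NoHomFromAbove.of_distTriang (F.triangle_distinguished i) ih
      (noHomFromAbove_of_mem (F.factor_mem i) (ht i))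

lemma noHomFromAbove_obj {P : ℝ → Set D} {E : D} (F : HNFiltration D P E) {t : ℝ}
    (hE : S.NoHomFromAbove t E) {k : ℕ} (hk : k ≤ F.n)
    (hF : ∀ i : Fin F.n, k ≤ i.1 → S.NoHomFromAbove (t + 1) (F.factor i)) :
    S.NoHomFromAbove t (F.obj ⟨k, by omega⟩) := by
  suffices ∀ j : Fin (F.n + 1), k ≤ j.1 → S.NoHomFromAbove t (F.obj j) from this _ le_rfl
  intro j
  induction j using Fin.reverseInduction with
  | last => intro _; rw [F.obj_last]; exact hE
  | cast i ih =>
    intro hi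
    exact NoHomFromAbove.of_distTriang (inv_rot_of_distTriang _ (F.triangle_distinguished i))
      ((hF i hi).shift_neg.mono (by linarith))
      (ih (by simp only [Fin.val_succ, Fin.val_castSucc] at hi ⊢; omega))

lemma exists_hom_ne_zero_of_hom_obj_ne_zero {P : ℝ → Set D} {E X : D} (F : HNFiltration D P E)
    (hX : ∀ i (g : X ⟶ (F.factor i)⟦(-1 : ℤ)⟧), g = 0) (j : Fin (F.n + 1)) (w : X ⟶ F.obj j)
    (hw : w ≠ 0) : ∃ u : X ⟶ E, u ≠ 0 := by
  induction j using Fin.reverseInduction with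
  | last =>
    refine ⟨w ≫ eqToHom F.obj_last, fun h => hw ?_⟩
    simpa using congrArg (· ≫ eqToHom F.obj_last.symm) h
  | cast i ih =>
    refine ih (w ≫ F.mor₁ i) fun h => hw ?_
    obtain ⟨g, rfl⟩ := Triangle.coyoneda_exact₂ _
      (inv_rot_of_distTriang _ (F.triangle_distinguished i)) w h
    rw [hX i g]
    exact zero_comp

lemma hom_eq_zero_of_lt_phase {X Y : D} (F : HNFiltration D S.P X) {c : ℝ}
    (hc : ∀ i, c < F.phase i) (hY : Y ∈ S.P c) (f : X ⟶ Y) : f = 0 := by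
  suffices ∀ j (g : F.obj j ⟶ Y), g = 0 by
    simpa using this (Fin.last F.n) (eqToHom F.obj_last ≫ f)
  intro j
  induction j using Fin.induction with
  | zero => exact fun g => F.obj_zero.eq_of_src g 0
  | succ i ih =>
    intro g
    obtain ⟨w, rfl⟩ := Triangle.yoneda_exact₂ _ (F.triangle_distinguished i) g (ih _)
    rw [S.hom_vanish (hc i) (F.factor_mem i) hY w]
    exact comp_zero

lemma exists_hom_top_factor_ne_zero {E : D} (F : HNFiltration D S.P E) (hn : 0 < F.n) :
    ∃ u : F.factor ⟨0, hn⟩ ⟶ E, u ≠ 0 := by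
  have := F.isIso_mor₂_zero hn
  have hvanish : ∀ i (g : F.factor ⟨0, hn⟩ ⟶ (F.factor i)⟦(-1 : ℤ)⟧), g = 0 := fun i =>
    hom_shift_eq_zero fun g => S.hom_vanish (by linarith [F.phase_le_phase_zero hn i])
      ((S.shift_mem _ _).1 (F.factor_mem _)) (F.factor_mem i) g
  refine exists_hom_ne_zero_of_hom_obj_ne_zero F hvanish _ (inv (F.mor₂ ⟨0, hn⟩))
    fun h => F.factor_nonzero ⟨0, hn⟩ ?_
  rw [IsZero.iff_id_eq_zero]
  exact (IsIso.inv_hom_id _).symm.trans (by rw [h, zero_comp])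

lemma exists_hom_bot_factor_ne_zero {E : D} (F : HNFiltration D S.P E) (hn : 0 < F.n) :
    ∃ v : E ⟶ F.factor ⟨F.n - 1, by omega⟩, v ≠ 0 := by
  let i : Fin F.n := ⟨F.n - 1, by omega⟩
  refine ⟨eqToHom (F.obj_succ_last hn).symm ≫ F.mor₂ i, fun hv => F.factor_nonzero i ?_⟩
  have h₂ : F.mor₂ i = 0 := by rwa [eqToHom_comp_iff, comp_zero] at hv
  obtain ⟨g, hg⟩ := Triangle.yoneda_exact₃ _ (F.triangle_distinguished i) (𝟙 _)
    (by rw [h₂]; exact zero_comp)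
  have hg0 : g = 0 := by
    refine shift_hom_eq_zero (S.hom_eq_zero_of_lt_phase (F.truncate (F.n - 1) (by omega))
      (fun l => ?_) (S.shift_neg_mem (F.factor_mem i))) g
    have hl : l.1 < F.n - 1 := l.2
    have : F.phase i ≤ F.phase ⟨l.1, by omega⟩ := F.phase_last_le_phase hn _
    show F.phase i - 1 < F.phase ⟨l.1, _⟩
    linarith
  rw [IsZero.iff_id_eq_zero]
  exact hg.trans (by rw [hg0]; exact comp_zero)

lemma phase_zero_le_of_noHomFromAbove {t : ℝ} {E : D} (F : HNFiltration D S.P E) (hn : 0 < F.n)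
    (h : S.NoHomFromAbove t E) : F.phase ⟨0, hn⟩ ≤ t := by
  by_contra! ht
  obtain ⟨u, hu⟩ := S.exists_hom_top_factor_ne_zero F hn
  exact hu (h ht (F.factor_mem _) u)

lemma isGreatest_hnPhases {E : D} (F : HNFiltration D S.P E) (hn : 0 < F.n) :
    IsGreatest (S.hnPhases E) (F.phase ⟨0, hn⟩) := by
  refine ⟨⟨F, _, rfl⟩, ?_⟩
  rintro _ ⟨G, i, rfl⟩
  exact (G.phase_le_phase_zero i.pos i).trans (S.phase_zero_le_of_noHomFromAbove G i.pos
    (noHomFromAbove_of_phase_le F (F.phase_le_phase_zero hn)))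

lemma isLeast_hnPhases {E : D} (F : HNFiltration D S.P E) (hn : 0 < F.n) :
    IsLeast (S.hnPhases E) (F.phase ⟨F.n - 1, by omega⟩) := by
  refine ⟨⟨F, _, rfl⟩, ?_⟩
  rintro _ ⟨G, i, rfl⟩
  refine le_trans ?_ (G.phase_last_le_phase i.pos i)
  by_contra! h
  obtain ⟨v, hv⟩ := S.exists_hom_bot_factor_ne_zero G i.pos
  exact hv (S.hom_eq_zero_of_lt_phase F (fun j => h.trans_le (F.phase_last_le_phase hn j))
    (G.factor_mem _) v)

lemma phasePlus_eq {E : D} (F : HNFiltration D S.P E) (hn : 0 < F.n) :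
    S.phasePlus E = F.phase ⟨0, hn⟩ :=
  (S.isGreatest_hnPhases F hn).csSup_eq

lemma phaseMinus_eq {E : D} (F : HNFiltration D S.P E) (hn : 0 < F.n) :
    S.phaseMinus E = F.phase ⟨F.n - 1, by omega⟩ :=
  (S.isLeast_hnPhases F hn).csInf_eq

lemma phase_le_phasePlus {E : D} (F : HNFiltration D S.P E) (i : Fin F.n) :
    F.phase i ≤ S.phasePlus E :=
  S.phasePlus_eq F i.pos ▸ F.phase_le_phase_zero i.pos i

lemma phaseMinus_le_phase {E : D} (F : HNFiltration D S.P E) (i : Fin F.n) :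
    S.phaseMinus E ≤ F.phase i :=
  S.phaseMinus_eq F i.pos ▸ F.phase_last_le_phase i.pos i

lemma phasePlus_of_mem {φ : ℝ} {E : D} (hE : E ∈ S.P φ) (hne : ¬ IsZero E) :
    S.phasePlus E = φ :=
  S.phasePlus_eq (HNFiltration.single hE hne) one_pos

lemma phasePlus_le_iff_noHomFromAbove {t : ℝ} {E : D} (hE : ¬ IsZero E) :
    S.phasePlus E ≤ t ↔ S.NoHomFromAbove t E := by
  obtain ⟨F⟩ := S.hn_exists E
  have hn := F.pos_of_not_isZero hE
  rw [S.phasePlus_eq F hn]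
  exact ⟨fun h => noHomFromAbove_of_phase_le F fun i => (F.phase_le_phase_zero hn i).trans h,
    S.phase_zero_le_of_noHomFromAbove F hn⟩

lemma mem_of_forall_phase_eq {φ : ℝ} {E : D} (F : HNFiltration D S.P E)
    (h : ∀ i, F.phase i = φ) : E ∈ S.P φ := by
  by_cases hE : IsZero E
  · exact S.zero_mem φ E hE
  have hn := F.pos_of_not_isZero hE
  have h1 : F.n = 1 := by
    by_contra h1
    have h01 := F.phase_strictAnti (a := ⟨0, hn⟩) (b := ⟨1, by omega⟩) (Fin.mk_lt_mk.2 one_pos)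
    rw [h, h] at h01
    exact lt_irrefl _ h01
  have := F.isIso_mor₂_zero hn
  have hobj : F.obj (⟨0, hn⟩ : Fin F.n).succ = E := by
    simpa [h1] using F.obj_succ_last hn
  exact S.iso_closed _ _ _ (h _ ▸ F.factor_mem _)
    ⟨(asIso (F.mor₂ ⟨0, hn⟩)).symm ≪≫ eqToIso hobj⟩

end Slicing

def semiclosedUpperHalfPlane : Set ℂ := {z | 0 < z.im ∨ z.im = 0 ∧ z.re < 0}

lemma add_mem_semiclosedUpperHalfPlane {z w : ℂ} (hz : z ∈ semiclosedUpperHalfPlane)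
    (hw : w ∈ semiclosedUpperHalfPlane) : z + w ∈ semiclosedUpperHalfPlane := by
  simp only [semiclosedUpperHalfPlane, Set.mem_ofPred_eq, Complex.add_im, Complex.add_re] at *
  rcases hz with hz | ⟨hz, hz'⟩ <;> rcases hw with hw | ⟨hw, hw'⟩
  all_goals first | exact Or.inl (by linarith) | exact Or.inr ⟨by linarith, by linarith⟩

lemma ofReal_mul_mem_semiclosedUpperHalfPlane {m : ℝ} {z : ℂ} (hm : 0 < m)
    (hz : z ∈ semiclosedUpperHalfPlane) : (m : ℂ) * z ∈ semiclosedUpperHalfPlane := by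
  simp only [semiclosedUpperHalfPlane, Set.mem_ofPred_eq, Complex.re_ofReal_mul,
    Complex.im_ofReal_mul] at *
  rcases hz with hz | ⟨hz, hz'⟩
  · exact Or.inl (mul_pos hm hz)
  · exact Or.inr ⟨by rw [hz, mul_zero], mul_neg_of_pos_of_neg hm hz'⟩

lemma exp_mem_semiclosedUpperHalfPlane {ψ : ℝ} (h₀ : 0 < ψ) (h₁ : ψ ≤ 1) :
    Complex.exp ((Real.pi * ψ : ℝ) * Complex.I) ∈ semiclosedUpperHalfPlane := by
  rcases h₁.lt_or_eq with h₁ | rfl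
  · left
    rw [Complex.exp_ofReal_mul_I_im]
    exact Real.sin_pos_of_pos_of_lt_pi (by positivity) (by nlinarith [Real.pi_pos])
  · right
    simp

lemma neg_notMem_semiclosedUpperHalfPlane {z : ℂ} (hz : z ∈ semiclosedUpperHalfPlane) :
    -z ∉ semiclosedUpperHalfPlane := by
  simp only [semiclosedUpperHalfPlane, Set.mem_ofPred_eq, Complex.neg_im, Complex.neg_re] at *
  rcases hz with hz | ⟨hz, hz'⟩ <;> rintro (h | ⟨h, h'⟩) <;> linarith

lemma zero_notMem_semiclosedUpperHalfPlane : (0 : ℂ) ∉ semiclosedUpperHalfPlane :=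
  fun h => neg_notMem_semiclosedUpperHalfPlane h (by rwa [neg_zero])

namespace PreStability

lemma Z_mul_exp_mem_semiclosedUpperHalfPlane (σ : PreStability D) {E : D}
    (F : HNFiltration D σ.slicing.P E) (hn : 0 < F.n) {a : ℝ}
    (ha : ∀ i, F.phase i ∈ Set.Ioc a (a + 1)) :
    σ.Z E * Complex.exp (-(Real.pi * a : ℝ) * Complex.I) ∈ semiclosedUpperHalfPlane := by
  rw [F.map_eq_sum_factor σ.Z σ.Z_zero σ.Z_additive, Finset.sum_mul]
  refine Finset.sum_induction_nonempty _ _ (fun _ _ => add_mem_semiclosedUpperHalfPlane)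
    ⟨⟨0, hn⟩, Finset.mem_univ _⟩ fun i _ => ?_
  obtain ⟨m, hm, hZ⟩ := σ.Z_phase _ _ (F.factor_mem i) (F.factor_nonzero i)
  have hrot : σ.Z (F.factor i) * Complex.exp (-(Real.pi * a : ℝ) * Complex.I) =
      m * Complex.exp ((Real.pi * (F.phase i - a) : ℝ) * Complex.I) := by
    rw [hZ, mul_assoc, ← Complex.exp_add]
    push_cast
    ring_nf
  rw [hrot]
  exact ofReal_mul_mem_semiclosedUpperHalfPlane hm
    (exp_mem_semiclosedUpperHalfPlane (by linarith [(ha i).1]) (by linarith [(ha i).2]))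

end PreStability

namespace Slicing

variable {S : Slicing D}

/-- `d(S, T) ≤ 1` for the phase part of Bridgeland's generalized metric. -/
def PhaseDistLeOne (S T : Slicing D) : Prop :=
  ∀ E : D, ¬ IsZero E →
    |S.phasePlus E - T.phasePlus E| ≤ 1 ∧ |S.phaseMinus E - T.phaseMinus E| ≤ 1

lemma PhaseDistLeOne.symm {T : Slicing D} (h : S.PhaseDistLeOne T) : T.PhaseDistLeOne S :=
  fun E hE => by rw [abs_sub_comm, abs_sub_comm (T.phaseMinus E)]; exact h E hE

end Slicing

namespace PreStability

open Slicing

variable {σ τ : PreStability D}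

lemma noHomFromAbove_obj_of_mem (hd : σ.slicing.PhaseDistLeOne τ.slicing) {φ : ℝ} {E : D}
    (hE : E ∈ σ.slicing.P φ) (F : HNFiltration D τ.slicing.P E) {k : ℕ} (hk : k ≤ F.n)
    (hF : ∀ i : Fin F.n, k ≤ i.1 → F.phase i ≤ φ) :
    σ.slicing.NoHomFromAbove φ (F.obj ⟨k, by omega⟩) := by
  refine noHomFromAbove_obj F (noHomFromAbove_of_mem hE le_rfl) hk fun i hi => ?_
  have hA := F.factor_nonzero i
  rw [← phasePlus_le_iff_noHomFromAbove hA]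
  have := (abs_sub_le_iff.1 (hd _ hA).1).1
  rw [τ.slicing.phasePlus_of_mem (F.factor_mem i) hA] at this
  linarith [hF i hi]

lemma phase_le_of_mem (hZ : ∀ E, σ.Z E = τ.Z E) (hd : σ.slicing.PhaseDistLeOne τ.slicing)
    {φ : ℝ} {E : D} (hE : E ∈ σ.slicing.P φ) (hne : ¬ IsZero E)
    (F : HNFiltration D τ.slicing.P E) (i : Fin F.n) : F.phase i ≤ φ := by
  by_contra! hi
  obtain ⟨k, hkn, hk⟩ := F.exists_phase_split φ
  have hk0 : 0 < k := by have := (hk i).1 hi; omega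
  -- `V` collects the `τ`-HN factors of `E` of phase `> φ`
  let V := F.obj ⟨k, by omega⟩
  let FV := F.truncate k hkn
  have hτ : τ.Z V * Complex.exp (-(Real.pi * φ : ℝ) * Complex.I) ∈ semiclosedUpperHalfPlane := by
    refine τ.Z_mul_exp_mem_semiclosedUpperHalfPlane FV hk0 fun j => ⟨(hk _).2 j.2, ?_⟩
    have := (abs_sub_le_iff.1 (hd E hne).1).2
    rw [σ.slicing.phasePlus_of_mem hE hne] at this
    show F.phase ⟨j.1, lt_of_lt_of_le j.2 hkn⟩ ≤ φ + 1
    linarith [τ.slicing.phase_le_phasePlus F ⟨j.1, lt_of_lt_of_le j.2 hkn⟩]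
  have hV : ¬ IsZero V := fun h => zero_notMem_semiclosedUpperHalfPlane
    (by rwa [τ.Z_zero V h, zero_mul] at hτ)
  have hVσ : σ.slicing.NoHomFromAbove φ V :=
    noHomFromAbove_obj_of_mem hd hE F hkn fun j hj => not_lt.1 (mt (hk j).1 (not_lt.2 hj))
  obtain ⟨G⟩ := σ.slicing.hn_exists V
  have hG : ∀ l, G.phase l ∈ Set.Ioc (φ - 1) (φ - 1 + 1) := by
    intro l
    rw [sub_add_cancel]
    refine ⟨?_, (σ.slicing.phase_le_phasePlus G l).trans
      ((phasePlus_le_iff_noHomFromAbove hV).2 hVσ)⟩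
    have h₁ := (abs_sub_le_iff.1 (hd V hV).2).2
    have h₂ : φ < τ.slicing.phaseMinus V := by
      rw [τ.slicing.phaseMinus_eq FV hk0]
      exact (hk _).2 (by show k - 1 < k; omega)
    linarith [σ.slicing.phaseMinus_le_phase G l]
  have hσ := σ.Z_mul_exp_mem_semiclosedUpperHalfPlane G (G.pos_of_not_isZero hV) hG
  have hexp : Complex.exp (-(Real.pi * (φ - 1) : ℝ) * Complex.I) =
      -Complex.exp (-(Real.pi * φ : ℝ) * Complex.I) := by
    rw [show (-(Real.pi * (φ - 1) : ℝ) : ℂ) * Complex.I =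
      -(Real.pi * φ : ℝ) * Complex.I + Real.pi * Complex.I by push_cast; ring,
      Complex.exp_add, Complex.exp_pi_mul_I, mul_neg_one]
  rw [hZ, hexp, mul_neg] at hσ
  exact neg_notMem_semiclosedUpperHalfPlane hτ hσ

lemma le_phase_of_mem (hZ : ∀ E, σ.Z E = τ.Z E) (hd : σ.slicing.PhaseDistLeOne τ.slicing)
    {φ : ℝ} {E : D} (hE : E ∈ σ.slicing.P φ) (F : HNFiltration D τ.slicing.P E) (i : Fin F.n) :
    φ ≤ F.phase i := by
  by_contra! hi
  have hn : 0 < F.n := i.pos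
  obtain ⟨v, hv⟩ := τ.slicing.exists_hom_bot_factor_ne_zero F hn
  obtain ⟨G⟩ := σ.slicing.hn_exists (F.factor ⟨F.n - 1, by omega⟩)
  have hB := noHomFromAbove_of_phase_le G fun l => phase_le_of_mem (fun X => (hZ X).symm) hd.symm
    (F.factor_mem _) (F.factor_nonzero _) G l
  exact hv (hB ((F.phase_last_le_phase hn i).trans_lt hi) hE v)

lemma P_subset_of_Z_eq (hZ : ∀ E, σ.Z E = τ.Z E) (hd : σ.slicing.PhaseDistLeOne τ.slicing)
    (φ : ℝ) : σ.slicing.P φ ⊆ τ.slicing.P φ := by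
  intro E hE
  by_cases hne : IsZero E
  · exact τ.slicing.zero_mem φ E hne
  obtain ⟨F⟩ := τ.slicing.hn_exists E
  exact τ.slicing.mem_of_forall_phase_eq F fun i =>
    le_antisymm (phase_le_of_mem hZ hd hE hne F i) (le_phase_of_mem hZ hd hE F i)

end PreStability

/-- Fu–Li–Zhao, Lemma 4.7.
Let `σ` and `τ` be two stability conditions on `D^b(X)` with the same central charge,
and suppose `d(σ, τ) ≤ 1` for the generalized metric
`d(σ, τ) = sup_{E ≠ 0} max(|φ⁻_σ(E) - φ⁻_τ(E)|, |φ⁺_σ(E) - φ⁺_τ(E)|)` (expressed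
here by the pointwise bounds).  Then `σ = τ`, i.e. the slicings (and hence the
stability conditions) coincide. -/
theorem eq_of_same_central_charge_and_dist_le_one
    (σ τ : StabilityCondition.{w} D)
    (hZ : ∀ E : D, σ.Z E = τ.Z E)
    (hd : ∀ E : D, ¬ IsZero E →
      |σ.slicing.phasePlus E - τ.slicing.phasePlus E| ≤ 1 ∧
      |σ.slicing.phaseMinus E - τ.slicing.phaseMinus E| ≤ 1) :
    ∀ φ : ℝ, σ.slicing.P φ = τ.slicing.P φ := fun φ =>
  (PreStability.P_subset_of_Z_eq hZ hd φ).antisymm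
    (PreStability.P_subset_of_Z_eq (fun E => (hZ E).symm) (Slicing.PhaseDistLeOne.symm hd) φ)

end BridgelandStability
end
end
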